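/- Let (𝔫, ⟨·,·⟩) be a nonabelian metric nilpotent Lie algebra with orthogonal Ricci-diagonal basis B, Gram matrix U and structure vector a relative to B, with m = |Λ_B|, and let β ∈ ℝ. Then the endomorphism Ric − β·Id of 𝔫 is a derivation of the Lie algebra 𝔫 if and only if U a = −2β·𝟙_m, where 𝟙_m ∈ ℝ^m is the vector with all entries 1 (i.e., ⟨·,·⟩ is a soliton inner product with nilsoliton constant β if and only if U a = −2β·𝟙_m). -/

import Mathlib

/-- Structure constants of a Lie algebra relative to a basis `b`:
`⁅b j, b k⁆ = ∑ l, structConst b j k l • b l`. -/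
noncomputable def structConst {n : ℕ} {L : Type} [LieRing L] [LieAlgebra ℝ L]
    (b : Module.Basis (Fin n) ℝ L) (j k l : Fin n) : ℝ := b.repr ⁅b j, b k⁆ l

/-- The root vector `y_{jk}^l = e_j + e_k - e_l ∈ ℝⁿ`. -/
noncomputable def rootVector {n : ℕ} (j k l : Fin n) (i : Fin n) : ℝ :=
  (if i = j then (1:ℝ) else 0) + (if i = k then 1 else 0) - (if i = l then 1 else 0)

/-- The dictionary order on index triples. -/
def dictLt {n : ℕ} (t t' : Fin n × Fin n × Fin n) : Prop :=
  t.1 < t'.1 ∨ (t.1 = t'.1 ∧ (t.2.1 < t'.2.1 ∨ (t.2.1 = t'.2.1 ∧ t.2.2 < t'.2.2)))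

/-- `σ : Fin m → (Fin n)³` enumerates, in dictionary order, the set
`Λ_B = {(j,k,l) : α_{jk}^l ≠ 0, j < k}` of index triples of nonzero
structure constants of the Lie algebra relative to the basis `b`
(in particular `m = |Λ_B|`). -/
def IsEnumerationOfLambda {n m : ℕ} {L : Type} [LieRing L] [LieAlgebra ℝ L]
    (b : Module.Basis (Fin n) ℝ L) (σ : Fin m → Fin n × Fin n × Fin n) : Prop :=
  (∀ t : Fin n × Fin n × Fin n,
      (t.1 < t.2.1 ∧ structConst b t.1 t.2.1 t.2.2 ≠ 0) ↔ (∃ r, σ r = t)) ∧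
  (∀ r r' : Fin m, r < r' → dictLt (σ r) (σ r'))

/-- The `m × n` root matrix `Y`, whose `r`-th row is the root vector of the
`r`-th triple of `Λ_B`. -/
noncomputable def rootMatrix {n m : ℕ} (σ : Fin m → Fin n × Fin n × Fin n) :
    Matrix (Fin m) (Fin n) ℝ :=
  Matrix.of fun r i => rootVector (σ r).1 (σ r).2.1 (σ r).2.2 i

/-- The `m × m` Gram matrix `U = Y Yᵀ`. -/
noncomputable def gramMatrix {n m : ℕ} (σ : Fin m → Fin n × Fin n × Fin n) :
    Matrix (Fin m) (Fin m) ℝ :=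
  rootMatrix σ * (rootMatrix σ).transpose

/-- The structure vector: its `r`-th entry is `(q_l/(q_j q_k)) (α_{jk}^l)²`,
where `(j,k,l)` is the `r`-th triple of `Λ_B` and `q_i` are the diagonal
metric coefficients. -/
noncomputable def structVector {n m : ℕ} {L : Type} [LieRing L] [LieAlgebra ℝ L]
    (b : Module.Basis (Fin n) ℝ L) (σ : Fin m → Fin n × Fin n × Fin n)
    (q : Fin n → ℝ) (r : Fin m) : ℝ :=
  q (σ r).2.2 / (q (σ r).1 * q (σ r).2.1) *
    (structConst b (σ r).1 (σ r).2.1 (σ r).2.2) ^ 2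

/-- The Ricci form `ric(x,y) = -(1/2)⟨ad x, ad y⟩ + (1/4)⟨J x, J y⟩`, where the
inner product on endomorphisms is `⟨A, B⟩ = tr (A ∘ B*)`; it is expressed here
through a given adjoint operation `adj` (characterized by
`Q (adj A x) y = Q x (A y)`) and a given map `J` (characterized by
`Q (J x y) z = Q x ⁅y, z⁆`). -/
noncomputable def ricForm {L : Type} [LieRing L] [LieAlgebra ℝ L]
    (adj : (L →ₗ[ℝ] L) → (L →ₗ[ℝ] L)) (J : L → L →ₗ[ℝ] L) (x y : L) : ℝ :=
  -(1/2) * LinearMap.trace ℝ L ((LieAlgebra.ad ℝ L x) ∘ₗ adj (LieAlgebra.ad ℝ L y))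
    + (1/4) * LinearMap.trace ℝ L ((J x) ∘ₗ adj (J y))


/-!
In an orthogonal Ricci-diagonal basis the Ricci endomorphism is diagonal, `Ric x_i = ρ_i x_i`, and
a diagonal endomorphism `D x_i = d_i x_i` is a derivation iff `d_j + d_k = d_l` whenever
`α_{jk}^l ≠ 0`. For `D = Ric - β·Id` this says `(Y ρ)_r = β` for every triple of `Λ_B`.
Evaluating the traces in the Ricci form in the orthogonal basis gives `Yᵀ a = -2ρ`, hence
`U a = Y Yᵀ a = -2 Y ρ`, and the two conditions agree.
-/

namespace LinearMap.IsOrthoᵢ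

variable {K M ι : Type*} [Field K] [AddCommGroup M] [Module K M] [Fintype ι]
  {Q : M →ₗ[K] M →ₗ[K] K} {b : Module.Basis ι K M}

theorem apply_eq_sum (hb : Q.IsOrthoᵢ b) (v w : M) :
    Q v w = ∑ i, b.repr v i * b.repr w i * Q (b i) (b i) := by
  conv_lhs => rw [← b.sum_repr v, ← b.sum_repr w]
  simp only [map_sum, map_smul, LinearMap.sum_apply, LinearMap.smul_apply, smul_eq_mul,
    Finset.mul_sum]
  refine Finset.sum_congr rfl fun i _ => ?_
  rw [Finset.sum_eq_single i (fun j _ hji => by rw [hb hji, mul_zero, mul_zero]) (by simp)]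
  ring

theorem apply_basis_right (hb : Q.IsOrthoᵢ b) (v : M) (j : ι) :
    Q v (b j) = b.repr v j * Q (b j) (b j) := by
  classical
  rw [hb.apply_eq_sum]
  simp [Finsupp.single_apply]

theorem apply_basis_left (hb : Q.IsOrthoᵢ b) (v : M) (j : ι) :
    Q (b j) v = b.repr v j * Q (b j) (b j) := by
  classical
  rw [hb.apply_eq_sum]
  simp [Finsupp.single_apply]

theorem repr_eq_div (hb : Q.IsOrthoᵢ b) {j : ι} (hj : Q (b j) (b j) ≠ 0) (v : M) :
    b.repr v j = Q v (b j) / Q (b j) (b j) := by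
  rw [hb.apply_basis_right, mul_div_cancel_right₀ _ hj]

theorem eq_smul_of_apply_basis_eq_zero (hb : Q.IsOrthoᵢ b) (hq : ∀ j, Q (b j) (b j) ≠ 0)
    {v : M} {i : ι} (hv : ∀ j, j ≠ i → Q v (b j) = 0) :
    v = (Q v (b i) / Q (b i) (b i)) • b i := by
  classical
  refine b.ext_elem fun j => ?_
  rw [map_smul, b.repr_self, Finsupp.smul_apply, Finsupp.single_apply, hb.repr_eq_div (hq j)]
  by_cases hji : i = j
  · subst hji; simp
  · rw [if_neg hji, hv j (Ne.symm hji), zero_div, smul_zero]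

theorem trace_comp_eq_sum (hb : Q.IsOrthoᵢ b) (hq : ∀ j, Q (b j) (b j) ≠ 0)
    {A B B' : M →ₗ[K] M} (hB : ∀ x y, Q (B' x) y = Q x (B y)) :
    LinearMap.trace K M (A ∘ₗ B') = ∑ j, ∑ l,
      b.repr (A (b j)) l * b.repr (B (b j)) l * Q (b l) (b l) / Q (b j) (b j) := by
  classical
  have := Module.Finite.of_basis b
  rw [LinearMap.trace_comp_comm', LinearMap.trace_eq_matrix_trace K b, Matrix.trace]
  refine Finset.sum_congr rfl fun j _ => ?_
  rw [Matrix.diag_apply, LinearMap.toMatrix_apply, LinearMap.comp_apply, hb.repr_eq_div (hq j),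
    hB, hb.apply_eq_sum, Finset.sum_div]

end LinearMap.IsOrthoᵢ

section DiagonalDerivation

variable {R L ι : Type*} [CommRing R] [LieRing L] [LieAlgebra R L]
  (b : Module.Basis ι R L) {D : L →ₗ[R] L} {d : ι → R}

theorem Module.Basis.repr_apply_of_apply_eq_smul (hD : ∀ i, D (b i) = d i • b i) (v : L)
    (i : ι) : b.repr (D v) i = d i * b.repr v i := by
  classical
  have : (b.coord i).comp D = d i • b.coord i :=
    b.ext fun j => by
      by_cases hji : j = i
      · subst hji; simp [hD]
      · simp [hD, hji]
  exact LinearMap.congr_fun this v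

theorem forall_lie_apply_eq_iff_of_apply_eq_smul [IsDomain R] (hD : ∀ i, D (b i) = d i • b i) :
    (∀ x y : L, D ⁅x, y⁆ = ⁅D x, y⁆ + ⁅x, D y⁆) ↔
      ∀ j k l, b.repr ⁅b j, b k⁆ l ≠ 0 → d j + d k = d l := by
  have hbasis : ∀ j k l, b.repr (D ⁅b j, b k⁆) l = d l * b.repr ⁅b j, b k⁆ l ∧
      b.repr (⁅D (b j), b k⁆ + ⁅b j, D (b k)⁆) l = (d j + d k) * b.repr ⁅b j, b k⁆ l := by
    intro j k l
    refine ⟨b.repr_apply_of_apply_eq_smul hD _ l, ?_⟩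
    simp only [hD, smul_lie, lie_smul, ← add_smul, map_smul, Finsupp.smul_apply, smul_eq_mul]
  constructor
  · intro h j k l hc
    have := congr_arg (fun v => b.repr v l) (h (b j) (b k))
    simp only [(hbasis j k l).1, (hbasis j k l).2] at this
    exact (mul_right_cancel₀ hc this).symm
  · intro h
    set ad : L →ₗ[R] L →ₗ[R] L := (LieAlgebra.ad R L : L →ₗ[R] Module.End R L)
    have had : ∀ x y, ad x y = ⁅x, y⁆ := fun _ _ => rfl
    have : ad.compr₂ D = ad ∘ₗ D + ad.compl₂ D := by
      refine LinearMap.ext_basis b b fun j k => b.ext_elem fun l => ?_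
      simp only [LinearMap.compr₂_apply, LinearMap.add_apply, LinearMap.comp_apply,
        LinearMap.compl₂_apply, had, (hbasis j k l).1, (hbasis j k l).2]
      by_cases hc : b.repr ⁅b j, b k⁆ l = 0
      · simp [hc]
      · rw [h j k l hc]
    intro x y
    simpa only [LinearMap.compr₂_apply, LinearMap.add_apply, LinearMap.comp_apply,
      LinearMap.compl₂_apply, had] using LinearMap.congr_fun₂ this x y

end DiagonalDerivation

section StructureConstants

variable {n : ℕ} {L : Type} [LieRing L] [LieAlgebra ℝ L] (b : Module.Basis (Fin n) ℝ L)

theorem structConst_swap (j k l : Fin n) : structConst b k j l = -structConst b j k l := by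
  rw [structConst, structConst, ← lie_skew, map_neg, Finsupp.neg_apply]

theorem structConst_self (j l : Fin n) : structConst b j j l = 0 := by
  have := structConst_swap b j j l
  linarith

end StructureConstants

namespace IsEnumerationOfLambda

variable {n m : ℕ} {L : Type} [LieRing L] [LieAlgebra ℝ L] {b : Module.Basis (Fin n) ℝ L}
  {σ : Fin m → Fin n × Fin n × Fin n}

theorem injective (hσ : IsEnumerationOfLambda b σ) : Function.Injective σ := by
  have dictLt_irrefl (t : Fin n × Fin n × Fin n) : ¬ dictLt t t := by
    rintro (h | ⟨-, h | ⟨-, h⟩⟩) <;> exact lt_irrefl _ h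
  refine fun r r' he => by_contra fun hne => ?_
  rcases lt_or_gt_of_ne hne with hlt | hlt
  · exact dictLt_irrefl (σ r') (he ▸ hσ.2 r r' hlt)
  · exact dictLt_irrefl (σ r') (he ▸ hσ.2 r' r hlt)

theorem forall_structConst_ne_zero_iff (hσ : IsEnumerationOfLambda b σ)
    {P : Fin n → Fin n → Fin n → Prop} (hP : ∀ j k l, P j k l → P k j l) :
    (∀ j k l, structConst b j k l ≠ 0 → P j k l) ↔ ∀ r, P (σ r).1 (σ r).2.1 (σ r).2.2 := by
  constructor
  · exact fun h r => h _ _ _ ((hσ.1 (σ r)).2 ⟨r, rfl⟩).2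
  · intro h j k l hc
    rcases lt_trichotomy j k with hjk | rfl | hkj
    · obtain ⟨r, hr⟩ := (hσ.1 (j, k, l)).1 ⟨hjk, hc⟩
      simpa [hr] using h r
    · exact absurd (structConst_self b j l) hc
    · have hc' : structConst b k j l ≠ 0 := by rwa [structConst_swap, neg_ne_zero]
      obtain ⟨r, hr⟩ := (hσ.1 (k, j, l)).1 ⟨hkj, hc'⟩
      exact hP _ _ _ (by simpa [hr] using h r)

theorem two_mul_sum_eq (hσ : IsEnumerationOfLambda b σ) {F : Fin n × Fin n × Fin n → ℝ}
    (hF_swap : ∀ j k l, F (k, j, l) = F (j, k, l))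
    (hF : ∀ t, structConst b t.1 t.2.1 t.2.2 = 0 → F t = 0) :
    2 * ∑ r, F (σ r) = ∑ t, F t := by
  classical
  have h_enum : ∑ r, F (σ r) = ∑ t, if t.1 < t.2.1 then F t else 0 := by
    rw [← Finset.sum_filter, ← Finset.sum_image hσ.injective.injOn]
    refine Finset.sum_subset (fun t ht => ?_) (fun t ht hnt => ?_)
    · obtain ⟨r, -, rfl⟩ := Finset.mem_image.1 ht
      simpa using ((hσ.1 (σ r)).2 ⟨r, rfl⟩).1
    · refine hF t (by_contra fun hc => hnt ?_)
      obtain ⟨r, rfl⟩ := (hσ.1 t).1 ⟨(Finset.mem_filter.1 ht).2, hc⟩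
      exact Finset.mem_image_of_mem σ (Finset.mem_univ r)
  have h_swap : ∑ t, (if t.2.1 < t.1 then F t else 0) = ∑ t, if t.1 < t.2.1 then F t else 0 :=
    Fintype.sum_equiv ⟨fun t => (t.2.1, t.1, t.2.2), fun t => (t.2.1, t.1, t.2.2),
      fun _ => rfl, fun _ => rfl⟩ _ _ fun t => by simp [hF_swap]
  have h_split : ∀ t, F t = (if t.1 < t.2.1 then F t else 0) + if t.2.1 < t.1 then F t else 0 := by
    rintro ⟨j, k, l⟩
    rcases lt_trichotomy j k with hjk | rfl | hkj
    · simp [hjk, hjk.not_gt]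
    · simp [hF (j, j, l) (structConst_self b j l)]
    · simp [hkj, hkj.not_gt]
  rw [Finset.sum_congr rfl fun t _ => h_split t, Finset.sum_add_distrib, h_swap, h_enum]
  ring

end IsEnumerationOfLambda

section RootMatrix

open Matrix

variable {n m : ℕ}

theorem rootMatrix_mulVec (σ : Fin m → Fin n × Fin n × Fin n) (f : Fin n → ℝ) (r : Fin m) :
    (rootMatrix σ *ᵥ f) r = f (σ r).1 + f (σ r).2.1 - f (σ r).2.2 := by
  simp [rootMatrix, mulVec, dotProduct, rootVector, add_mul, sub_mul, ite_mul,
    Finset.sum_add_distrib, Finset.sum_sub_distrib]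

theorem sum_rootVector_mul (A : Fin n × Fin n × Fin n → ℝ) (i : Fin n) :
    ∑ t : Fin n × Fin n × Fin n, rootVector t.1 t.2.1 t.2.2 i * A t =
      ∑ j, ∑ l, A (i, j, l) + ∑ j, ∑ l, A (j, i, l) - ∑ j, ∑ k, A (j, k, i) := by
  simp only [Fintype.sum_prod_type]
  simp [rootVector, add_mul, sub_mul, ite_mul, Finset.sum_add_distrib, Finset.sum_sub_distrib]

end RootMatrix

section StructWeight

open Matrix

variable {n m : ℕ} {L : Type} [LieRing L] [LieAlgebra ℝ L] (b : Module.Basis (Fin n) ℝ L)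

-- `structVector b σ q r = structWeight b q (σ r)`: the structure vector extended to all triples.
noncomputable def structWeight (q : Fin n → ℝ) (t : Fin n × Fin n × Fin n) : ℝ :=
  q t.2.2 / (q t.1 * q t.2.1) * structConst b t.1 t.2.1 t.2.2 ^ 2

theorem structWeight_swap (q : Fin n → ℝ) (j k l : Fin n) :
    structWeight b q (k, j, l) = structWeight b q (j, k, l) := by
  simp only [structWeight, structConst_swap b j k l, neg_sq, mul_comm (q j)]

theorem transpose_rootMatrix_mulVec_structVector {σ : Fin m → Fin n × Fin n × Fin n}
    (hσ : IsEnumerationOfLambda b σ) (q : Fin n → ℝ) (i : Fin n) :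
    ((rootMatrix σ)ᵀ *ᵥ structVector b σ q) i =
      ∑ j, ∑ l, structWeight b q (i, j, l) - (1 / 2) * ∑ j, ∑ k, structWeight b q (j, k, i) := by
  have h := hσ.two_mul_sum_eq (F := fun t => rootVector t.1 t.2.1 t.2.2 i * structWeight b q t)
    (fun j k l => by rw [structWeight_swap]; simp only [rootVector]; ring)
    (fun t ht => by simp [structWeight, ht])
  rw [sum_rootVector_mul] at h
  simp only [structWeight_swap b q i] at h
  change ∑ r, rootVector (σ r).1 (σ r).2.1 (σ r).2.2 i * structWeight b q (σ r) = _
  linarith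

end StructWeight

section Ricci

variable {n : ℕ} {L : Type} [LieRing L] [LieAlgebra ℝ L] {Q : L →ₗ[ℝ] L →ₗ[ℝ] ℝ}
  {b : Module.Basis (Fin n) ℝ L} {adj : (L →ₗ[ℝ] L) → (L →ₗ[ℝ] L)} {J : L → L →ₗ[ℝ] L}

theorem ricForm_basis_self_div (hb : Q.IsOrthoᵢ b) (hq : ∀ i, Q (b i) (b i) ≠ 0)
    (hadj : ∀ A x y, Q (adj A x) y = Q x (A y)) (hJ : ∀ x y z, Q (J x y) z = Q x ⁅y, z⁆)
    (i : Fin n) :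
    ricForm adj J (b i) (b i) / Q (b i) (b i) =
      -(1 / 2) * ∑ j, ∑ l, structWeight b (fun i => Q (b i) (b i)) (i, j, l)
        + (1 / 4) * ∑ j, ∑ k, structWeight b (fun i => Q (b i) (b i)) (j, k, i) := by
  have h_ad : ∀ j l, b.repr (LieAlgebra.ad ℝ L (b i) (b j)) l = structConst b i j l :=
    fun _ _ => rfl
  have h_J : ∀ j k, b.repr (J (b i) (b j)) k =
      structConst b j k i * Q (b i) (b i) / Q (b k) (b k) := by
    intro j k
    rw [hb.repr_eq_div (hq k), hJ, hb.apply_basis_left]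
    rfl
  rw [ricForm, hb.trace_comp_eq_sum hq (hadj _), hb.trace_comp_eq_sum hq (hadj _)]
  simp only [h_ad, h_J, structWeight, add_div, mul_div_assoc, Finset.sum_div, Finset.mul_sum]
  congr 1 <;> refine Finset.sum_congr rfl fun j _ => Finset.sum_congr rfl fun k _ => by field_simp

end Ricci

open Matrix in
theorem stmt1_general
    {n m : ℕ} {L : Type} [LieRing L] [LieAlgebra ℝ L]
    (Q : L →ₗ[ℝ] L →ₗ[ℝ] ℝ)
    (hQpos : ∀ x, x ≠ 0 → 0 < Q x x)
    (b : Module.Basis (Fin n) ℝ L)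
    (hb : ∀ i j, i ≠ j → Q (b i) (b j) = 0)
    (σ : Fin m → Fin n × Fin n × Fin n)
    (hσ : IsEnumerationOfLambda b σ)
    (adj : (L →ₗ[ℝ] L) → (L →ₗ[ℝ] L))
    (hadj : ∀ (A : L →ₗ[ℝ] L) (x y : L), Q (adj A x) y = Q x (A y))
    (J : L → L →ₗ[ℝ] L)
    (hJ : ∀ x y z, Q (J x y) z = Q x ⁅y, z⁆)
    -- the basis is Ricci-diagonal
    (hdiag : ∀ i j, i ≠ j → ricForm adj J (b i) (b j) = 0)
    -- the Ricci endomorphism, characterized by `Q (Ric x) y = ric(x, y)`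
    (Ric : L →ₗ[ℝ] L)
    (hRic : ∀ x y, Q (Ric x) y = ricForm adj J x y)
    (β : ℝ) :
    (∀ x y : L,
        (Ric - β • LinearMap.id : L →ₗ[ℝ] L) ⁅x, y⁆
          = ⁅(Ric - β • LinearMap.id : L →ₗ[ℝ] L) x, y⁆
            + ⁅x, (Ric - β • LinearMap.id : L →ₗ[ℝ] L) y⁆)
      ↔ (gramMatrix σ).mulVec (structVector b σ fun i => Q (b i) (b i))
          = fun _ => -2 * β := by
  have hb : Q.IsOrthoᵢ b := hb
  have hq : ∀ i, Q (b i) (b i) ≠ 0 := fun i => (hQpos _ (b.ne_zero i)).ne'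
  set ρ : Fin n → ℝ := fun i => ricForm adj J (b i) (b i) / Q (b i) (b i)
  have hρ : ∀ i, (Ric - β • LinearMap.id : L →ₗ[ℝ] L) (b i) = (ρ i - β) • b i := by
    intro i
    have hRic_b : Ric (b i) = ρ i • b i := by
      rw [hb.eq_smul_of_apply_basis_eq_zero hq (v := Ric (b i)) fun j hj => by
        rw [hRic, hdiag i j hj.symm], hRic]
    rw [LinearMap.sub_apply, LinearMap.smul_apply, LinearMap.id_apply, hRic_b, sub_smul]
  have h_transpose :
      (rootMatrix σ)ᵀ *ᵥ structVector b σ (fun i => Q (b i) (b i)) = fun i => -2 * ρ i := by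
    funext i
    simp only [transpose_rootMatrix_mulVec_structVector b hσ, ρ,
      ricForm_basis_self_div hb hq hadj hJ]
    ring
  rw [forall_lie_apply_eq_iff_of_apply_eq_smul b hρ]
  calc _ ↔ ∀ r, (ρ (σ r).1 - β) + (ρ (σ r).2.1 - β) = ρ (σ r).2.2 - β :=
        hσ.forall_structConst_ne_zero_iff fun j k l h => by linarith
    _ ↔ _ := by
        rw [gramMatrix, ← mulVec_mulVec, h_transpose, funext_iff]
        refine forall_congr' fun r => ?_
        rw [rootMatrix_mulVec]
        constructor <;> intro h <;> linarith

/-- Let `(𝔫, Q)` be a nonabelian metric nilpotent Lie algebra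
with orthogonal Ricci-diagonal basis `B`, Gram matrix `U` and structure vector
`a` relative to `B`, `m = |Λ_B|`, and let `β ∈ ℝ`.  Then `Ric - β·Id` is a
derivation of `𝔫` if and only if `U a = -2β·𝟙_m`. -/
theorem stmt1
    {n m : ℕ} {L : Type} [LieRing L] [LieAlgebra ℝ L]
    [LieRing.IsNilpotent L]
    (Q : L →ₗ[ℝ] L →ₗ[ℝ] ℝ)
    (hQsymm : ∀ x y, Q x y = Q y x)
    (hQpos : ∀ x, x ≠ 0 → 0 < Q x x)
    (hnonab : ∃ x y : L, ⁅x, y⁆ ≠ 0)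
    (b : Module.Basis (Fin n) ℝ L)
    (hb : ∀ i j, i ≠ j → Q (b i) (b j) = 0)
    (σ : Fin m → Fin n × Fin n × Fin n)
    (hσ : IsEnumerationOfLambda b σ)
    (adj : (L →ₗ[ℝ] L) → (L →ₗ[ℝ] L))
    (hadj : ∀ (A : L →ₗ[ℝ] L) (x y : L), Q (adj A x) y = Q x (A y))
    (J : L → L →ₗ[ℝ] L)
    (hJ : ∀ x y z, Q (J x y) z = Q x ⁅y, z⁆)
    -- the basis is Ricci-diagonal
    (hdiag : ∀ i j, i ≠ j → ricForm adj J (b i) (b j) = 0)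
    -- the Ricci endomorphism, characterized by `Q (Ric x) y = ric(x, y)`
    (Ric : L →ₗ[ℝ] L)
    (hRic : ∀ x y, Q (Ric x) y = ricForm adj J x y)
    (β : ℝ) :
    (∀ x y : L,
        (Ric - β • LinearMap.id : L →ₗ[ℝ] L) ⁅x, y⁆
          = ⁅(Ric - β • LinearMap.id : L →ₗ[ℝ] L) x, y⁆
            + ⁅x, (Ric - β • LinearMap.id : L →ₗ[ℝ] L) y⁆)
      ↔ (gramMatrix σ).mulVec (structVector b σ fun i => Q (b i) (b i))
          = fun _ => -2 * β :=
  stmt1_general Q hQpos b hb σ hσ adj hadj J hJ hdiag Ric hRic β
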